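/- arXiv:2405.09766 — 3 statements merged into one kernel-verified Lean document; each statement's English description precedes it below -/
import Mathlib

section
/- Let X be a Banach lattice and ρ : X → ℝ a convex functional that is bounded above on every order interval [U,V] = {Z : U ≤ Z ≤ V}. Then ρ is norm continuous. -/
/-! A convex function on a Banach space is continuous as soon as it is bounded above near one
point. Near `0` this follows from order boundedness: if `ρ` were unbounded on every ball around
`0`, pick `xₙ` with `‖xₙ‖ < 2⁻ⁿ` and `ρ xₙ > n`. By completeness `Y = ∑ |xₙ|` exists, every `xₙ`
lies in the order interval `[-Y, Y]`, and `ρ` would be unbounded there. -/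

open Filter Set Topology

section BanachLattice

variable {X : Type*} [NormedAddCommGroup X] [Lattice X] [HasSolidNorm X] [IsOrderedAddMonoid X]
  [CompleteSpace X]

theorem exists_forall_abs_le_of_summable_norm {x : ℕ → X}
    (hx : Summable fun n => ‖x n‖) : ∃ Y : X, ∀ n, |x n| ≤ Y := by
  have hsum : Summable fun n => |x n| :=
    Summable.of_norm_bounded hx fun n => (norm_abs_eq_norm (x n)).le
  exact ⟨∑' n, |x n|, fun n => hsum.le_tsum n fun j _ => abs_nonneg _⟩

theorem isBoundedUnder_le_nhds_zero_of_bddAbove_image_Icc {f : X → ℝ}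
    (hf : ∀ Y : X, BddAbove (f '' Icc (-Y) Y)) : (𝓝 (0 : X)).IsBoundedUnder (· ≤ ·) f := by
  by_contra hunbdd
  have hseq : ∀ n : ℕ, ∃ x : X, ‖x‖ < (1 / 2 : ℝ) ^ n ∧ (n : ℝ) < f x := by
    intro n
    by_contra! hle
    exact hunbdd ⟨n, eventually_map.mpr <| eventually_iff_exists_mem.mpr
      ⟨Metric.ball 0 ((1 / 2 : ℝ) ^ n), Metric.ball_mem_nhds _ (by positivity),
        fun y hy => hle y (mem_ball_zero_iff.mp hy)⟩⟩
  choose x hx_norm hx_large using hseq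
  have hsummable : Summable fun n => ‖x n‖ :=
    Summable.of_nonneg_of_le (fun n => norm_nonneg _) (fun n => (hx_norm n).le)
      (summable_geometric_of_lt_one (by norm_num) (by norm_num))
  obtain ⟨Y, hY⟩ := exists_forall_abs_le_of_summable_norm hsummable
  obtain ⟨M, hM⟩ := hf Y
  obtain ⟨n, hn⟩ := exists_nat_gt M
  have hmem : x n ∈ Icc (-Y) Y :=
    ⟨neg_le.mp ((neg_le_abs (x n)).trans (hY n)), (le_abs_self (x n)).trans (hY n)⟩
  exact (hn.trans (hx_large n)).not_ge (hM ⟨x n, hmem, rfl⟩)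

end BanachLattice

/-- A convex functional on a Banach lattice that is bounded above on every
order interval is norm continuous. -/
theorem convex_orderBoundedAbove_continuous
    {X : Type*} [NormedAddCommGroup X] [Lattice X] [HasSolidNorm X] [IsOrderedAddMonoid X] [NormedSpace ℝ X] [CompleteSpace X]
    (ρ : X → ℝ) (hconv : ConvexOn ℝ Set.univ ρ)
    (hbdd : ∀ U V : X, U ≤ V → ∃ M : ℝ, ∀ Z ∈ Set.Icc U V, ρ Z ≤ M) :
    Continuous ρ := by
  have hbdd_symm : ∀ Y : X, BddAbove (ρ '' Icc (-Y) Y) := by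
    intro Y
    rcases (Icc (-Y) Y).eq_empty_or_nonempty with hempty | ⟨Z, hZ⟩
    · simp [hempty]
    obtain ⟨M, hM⟩ := hbdd (-Y) Y (hZ.1.trans hZ.2)
    exact ⟨M, forall_mem_image.mpr hM⟩
  have hnear_zero : ∃ x₀ ∈ univ, (𝓝 x₀).IsBoundedUnder (· ≤ ·) ρ :=
    ⟨0, mem_univ _, isBoundedUnder_le_nhds_zero_of_bddAbove_image_Icc hbdd_symm⟩
  have htfae := (hconv.continuousOn_tfae isOpen_univ univ_nonempty).out 3 1
  exact continuousOn_univ.mp (htfae.mp hnear_zero)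
end

section
/- Let Φ be an Orlicz function and (X_n), X random variables in the Young class Y^Φ. If X_n → X a.s. and E[Φ(|X_n|)] → E[Φ(|X|)], then there is a subsequence (X_{n_k}) which is dominated in Y^Φ, i.e., sup_k |X_{n_k}| ∈ Y^Φ; consequently X_{n_k} order converges to X in Y^Φ. -/
/-!
Since `Φ` is continuous on `[0, ∞)`, `Φ(|Xₙ|) → Φ(|X|)` a.s., and together with the convergence
of the means Scheffé's lemma upgrades this to convergence in `L¹`. A subsequence with
`∑ₖ ‖Φ(|X_{nₖ}|) - Φ(|X|)‖₁ < ∞` is dominated by the integrable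
`G = Φ(|X|) + ∑ₖ |Φ(|X_{nₖ}|) - Φ(|X|)|`. As `Φ` grows at least linearly, `Y = supₖ |X_{nₖ}|` is
finite a.s., and by continuity `Φ(Y) = supₖ Φ(|X_{nₖ}|) ≤ G`.
-/

open MeasureTheory Filter

structure IsOrliczFunction (Φ : ℝ → ℝ) : Prop where
  convexOn : ConvexOn ℝ (Set.Ici 0) Φ
  monotoneOn : MonotoneOn Φ (Set.Ici 0)
  map_zero : Φ 0 = 0
  nonconst : ∃ x : ℝ, 0 ≤ x ∧ Φ x ≠ 0

open Set Topology
open scoped ENNReal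

namespace IsOrliczFunction

variable {Φ : ℝ → ℝ}

lemma nonneg (hΦ : IsOrliczFunction Φ) {x : ℝ} (hx : 0 ≤ x) : 0 ≤ Φ x :=
  hΦ.map_zero ▸ hΦ.monotoneOn self_mem_Ici hx hx

lemma exists_pos (hΦ : IsOrliczFunction Φ) : ∃ x, 0 < x ∧ 0 < Φ x := by
  obtain ⟨x, hx, hΦx⟩ := hΦ.nonconst
  refine ⟨x, hx.lt_of_ne ?_, (hΦ.nonneg hx).lt_of_ne' hΦx⟩
  rintro rfl
  exact hΦx hΦ.map_zero

/-- `t ↦ Φ t / t` is monotone on `(0, ∞)`, written without division. -/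
lemma mul_apply_le_mul_apply (hΦ : IsOrliczFunction Φ) {s t : ℝ} (hs : 0 ≤ s) (hst : s ≤ t) :
    t * Φ s ≤ s * Φ t := by
  rcases (hs.trans hst).eq_or_lt with rfl | ht
  · obtain rfl : s = 0 := le_antisymm hst hs
    simp
  have hconv := hΦ.convexOn.2 self_mem_Ici (hs.trans hst) (sub_nonneg.2 ((div_le_one ht).2 hst))
    (div_nonneg hs ht.le) (sub_add_cancel 1 (s / t))
  simp only [smul_eq_mul, mul_zero, zero_add, hΦ.map_zero, div_mul_cancel₀ s ht.ne'] at hconv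
  calc t * Φ s ≤ t * (s / t * Φ t) := by gcongr
    _ = s * Φ t := by field_simp

lemma continuousOn (hΦ : IsOrliczFunction Φ) : ContinuousOn Φ (Ici 0) := by
  intro x hx
  rcases (mem_Ici.1 hx).eq_or_lt with rfl | hx
  · obtain ⟨x₁, hx₁, -⟩ := hΦ.exists_pos
    have hlin : Tendsto (fun s => s * (Φ x₁ / x₁)) (𝓝[Ici 0] 0) (𝓝 0) := by
      simpa using ((continuous_mul_const (Φ x₁ / x₁)).tendsto 0).mono_left nhdsWithin_le_nhds
    rw [ContinuousWithinAt, hΦ.map_zero]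
    refine tendsto_of_tendsto_of_tendsto_of_le_of_le' tendsto_const_nhds hlin ?_ ?_
    · filter_upwards [self_mem_nhdsWithin] with s hs
      exact hΦ.nonneg hs
    · filter_upwards [self_mem_nhdsWithin, nhdsWithin_le_nhds (eventually_le_nhds hx₁)]
        with s hs hsx₁
      rw [mul_div_assoc', le_div_iff₀ hx₁, mul_comm]
      exact hΦ.mul_apply_le_mul_apply hs hsx₁
  · exact (hΦ.convexOn.continuousOn_interior.continuousAt
      (by rw [interior_Ici]; exact Ioi_mem_nhds hx)).continuousWithinAt

lemma continuous_apply_abs (hΦ : IsOrliczFunction Φ) : Continuous fun x => Φ |x| :=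
  hΦ.continuousOn.comp_continuous continuous_abs fun x => abs_nonneg x

lemma tendsto_atTop (hΦ : IsOrliczFunction Φ) : Tendsto Φ atTop atTop := by
  obtain ⟨x₁, hx₁, hΦx₁⟩ := hΦ.exists_pos
  refine tendsto_atTop_mono' _ ?_ (tendsto_id.atTop_mul_const (div_pos hΦx₁ hx₁))
  filter_upwards [eventually_ge_atTop x₁] with t ht
  rw [id, mul_div_assoc', div_le_iff₀ hx₁]
  linarith [hΦ.mul_apply_le_mul_apply hx₁.le ht]

lemma bddAbove_range_abs_of_apply_abs_le (hΦ : IsOrliczFunction Φ) {ι : Type*} {a : ι → ℝ}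
    {C : ℝ} (h : ∀ i, Φ |a i| ≤ C) : BddAbove (range fun i => |a i|) := by
  obtain ⟨T, hT⟩ := eventually_atTop.1 (hΦ.tendsto_atTop.eventually_gt_atTop C)
  refine ⟨T, forall_mem_range.2 fun i => ?_⟩
  by_contra! hi
  exact (h i).not_gt (hT _ hi.le)

lemma apply_abs_iSup_abs_le (hΦ : IsOrliczFunction Φ) {ι : Type*} [Nonempty ι] {a : ι → ℝ}
    {C : ℝ} (h : ∀ i, Φ |a i| ≤ C) : Φ |(⨆ i, |a i|)| ≤ C := by
  have hclosed : IsClosed {x | Φ |x| ≤ C} := isClosed_le hΦ.continuous_apply_abs continuous_const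
  have hsub : range (fun i => |a i|) ⊆ {x | Φ |x| ≤ C} :=
    range_subset_iff.2 fun i => by simpa using h i
  exact closure_minimal hsub hclosed
    (csSup_mem_closure (range_nonempty _) (hΦ.bddAbove_range_abs_of_apply_abs_le h))

end IsOrliczFunction

section

variable {α : Type*} [MeasurableSpace α] {μ : Measure α}

theorem tendsto_integral_abs_sub_of_tendsto_integral {f : ℕ → α → ℝ} {g : α → ℝ}
    (hf_nonneg : ∀ n, 0 ≤ᵐ[μ] f n) (hf : ∀ n, Integrable (f n) μ) (hg : Integrable g μ)
    (hlim : ∀ᵐ x ∂μ, Tendsto (fun n => f n x) atTop (𝓝 (g x)))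
    (hint : Tendsto (fun n => ∫ x, f n x ∂μ) atTop (𝓝 (∫ x, g x ∂μ))) :
    Tendsto (fun n => ∫ x, |f n x - g x| ∂μ) atTop (𝓝 0) := by
  have hsub_int : ∀ n, Integrable (fun x => f n x - g x) μ := fun n => (hf n).sub hg
  have hpos_int : ∀ n, Integrable (fun x => max (g x - f n x) 0) μ :=
    fun n => (hg.sub (hf n)).pos_part
  -- `0 ≤ (g - f n)⁺ ≤ |g|` because `f n ≥ 0`
  have hpos : Tendsto (fun n => ∫ x, max (g x - f n x) 0 ∂μ) atTop (𝓝 0) := by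
    have := tendsto_integral_of_dominated_convergence (fun x => |g x|)
      (fun n => (hpos_int n).aestronglyMeasurable) hg.abs
      (fun n => by
        filter_upwards [hf_nonneg n] with x hx
        rw [Real.norm_of_nonneg (le_max_right _ _)]
        exact max_le (by linarith [le_abs_self (g x), show 0 ≤ f n x from hx]) (abs_nonneg _))
      (by
        filter_upwards [hlim] with x hx
        exact ((tendsto_const_nhds.sub hx).max tendsto_const_nhds))
    simpa using this
  have hsplit : ∀ n, ∫ x, |f n x - g x| ∂μ
      = (∫ x, f n x ∂μ - ∫ x, g x ∂μ) + 2 * ∫ x, max (g x - f n x) 0 ∂μ := by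
    intro n
    rw [← integral_sub (hf n) hg, ← integral_const_mul,
      ← integral_add (hsub_int n) ((hpos_int n).const_mul 2)]
    exact integral_congr_ae (ae_of_all _ fun x => by grind)
  simp_rw [hsplit]
  simpa using (hint.sub_const (∫ x, g x ∂μ)).add (hpos.const_mul 2)

theorem exists_subseq_dominated_of_tendsto_integral_abs_sub {f : ℕ → α → ℝ} {g : α → ℝ}
    (hf : ∀ n, Integrable (f n) μ) (hg : Integrable g μ)
    (hlim : Tendsto (fun n => ∫ x, |f n x - g x| ∂μ) atTop (𝓝 0)) :
    ∃ φ : ℕ → ℕ, StrictMono φ ∧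
      ∃ G : α → ℝ, Integrable G μ ∧ ∀ k, ∀ᵐ x ∂μ, |f (φ k) x| ≤ G x := by
  obtain ⟨φ, hφ, hsmall⟩ : ∃ φ : ℕ → ℕ, StrictMono φ ∧
      ∀ k, ∫ x, |f (φ k) x - g x| ∂μ ≤ (1 / 2) ^ k :=
    extraction_forall_of_eventually fun k => hlim.eventually (eventually_le_nhds (by positivity))
  have hsub_int : ∀ k, Integrable (fun x => f (φ k) x - g x) μ := fun k => (hf (φ k)).sub hg
  set F : α → ℝ≥0∞ := fun x => ‖g x‖ₑ + ∑' k, ‖f (φ k) x - g x‖ₑ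
  have hFm : AEMeasurable F μ := hg.aemeasurable.enorm.add
    (AEMeasurable.tsum fun k => (hsub_int k).aemeasurable.enorm)
  have hF : ∫⁻ x, F x ∂μ ≠ ∞ := by
    have hterm : ∀ k, ∫⁻ x, ‖f (φ k) x - g x‖ₑ ∂μ ≤ ENNReal.ofReal ((1 / 2) ^ k) := fun k => by
      rw [← ofReal_integral_norm_eq_lintegral_enorm (hsub_int k)]
      exact ENNReal.ofReal_le_ofReal (hsmall k)
    have hgeom : ∑' k : ℕ, ENNReal.ofReal ((1 / 2) ^ k) ≠ ∞ := by
      rw [← ENNReal.ofReal_tsum_of_nonneg (fun k => by positivity) summable_geometric_two]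
      exact ENNReal.ofReal_ne_top
    rw [lintegral_add_left' hg.aemeasurable.enorm,
      lintegral_tsum fun k => (hsub_int k).aemeasurable.enorm]
    exact ENNReal.add_ne_top.2
      ⟨hg.hasFiniteIntegral.ne, ne_top_of_le_ne_top hgeom (ENNReal.tsum_le_tsum hterm)⟩
  refine ⟨φ, hφ, fun x => (F x).toReal, integrable_toReal_of_lintegral_ne_top hFm hF,
    fun k => ?_⟩
  filter_upwards [ae_lt_top' hFm hF] with x hx
  have hle : ‖f (φ k) x‖ₑ ≤ F x := calc
    ‖f (φ k) x‖ₑ ≤ ‖g x‖ₑ + ‖f (φ k) x - g x‖ₑ := by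
      simpa using enorm_add_le (g x) (f (φ k) x - g x)
    _ ≤ F x := add_le_add le_rfl (ENNReal.le_tsum k)
  simpa using ENNReal.toReal_mono hx.ne hle

end

theorem young_dominated_subsequence_general
    {Ω : Type*} [MeasurableSpace Ω] (μ : Measure Ω)
    (Φ : ℝ → ℝ) (hΦ : IsOrliczFunction Φ)
    (X : ℕ → Ω → ℝ) (X₀ : Ω → ℝ)
    (hXm : ∀ n, Measurable (X n))
    (hint : ∀ n, Integrable (fun ω => Φ (|X n ω|)) μ)
    (hint₀ : Integrable (fun ω => Φ (|X₀ ω|)) μ)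
    (has : ∀ᵐ ω ∂μ, Tendsto (fun n => X n ω) atTop (nhds (X₀ ω)))
    (hmom : Tendsto (fun n => ∫ ω, Φ (|X n ω|) ∂μ) atTop
      (nhds (∫ ω, Φ (|X₀ ω|) ∂μ))) :
    ∃ φ : ℕ → ℕ, StrictMono φ ∧
      (∃ Y : Ω → ℝ, Integrable (fun ω => Φ (|Y ω|)) μ ∧
        ∀ k, ∀ᵐ ω ∂μ, |X (φ k) ω| ≤ Y ω) ∧
      (∀ᵐ ω ∂μ, Tendsto (fun k => X (φ k) ω) atTop (nhds (X₀ ω))) := by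
  have hΦX : ∀ᵐ ω ∂μ, Tendsto (fun n => Φ |X n ω|) atTop (𝓝 (Φ |X₀ ω|)) := by
    filter_upwards [has] with ω hω
    exact (hΦ.continuous_apply_abs.tendsto _).comp hω
  obtain ⟨φ, hφ, G, hG, hdom⟩ := exists_subseq_dominated_of_tendsto_integral_abs_sub hint hint₀
    (tendsto_integral_abs_sub_of_tendsto_integral
      (fun n => ae_of_all _ fun ω => hΦ.nonneg (abs_nonneg _)) hint hint₀ hΦX hmom)
  have hbound : ∀ᵐ ω ∂μ, ∀ k, Φ |X (φ k) ω| ≤ G ω := ae_all_iff.2 fun k => by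
    filter_upwards [hdom k] with ω hω
    exact (le_abs_self _).trans hω
  refine ⟨φ, hφ, ⟨fun ω => ⨆ k, |X (φ k) ω|, ?_, fun k => ?_⟩, ?_⟩
  · refine hG.mono' (hΦ.continuous_apply_abs.measurable.comp
      (Measurable.iSup fun k => (hXm (φ k)).abs)).aestronglyMeasurable ?_
    filter_upwards [hbound] with ω hω
    rw [Real.norm_of_nonneg (hΦ.nonneg (abs_nonneg _))]
    exact hΦ.apply_abs_iSup_abs_le hω
  · filter_upwards [hbound] with ω hω
    exact le_ciSup (hΦ.bddAbove_range_abs_of_apply_abs_le hω) k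
  · filter_upwards [has] with ω hω
    exact hω.comp hφ.tendsto_atTop

/-- If `X_n, X` lie in the Young class `Y^Φ`, `X_n → X` a.s. and
`E[Φ(|X_n|)] → E[Φ(|X|)]`, then some subsequence is dominated in `Y^Φ`, hence
order converges to `X` in `Y^Φ`. -/
theorem young_dominated_subsequence
    {Ω : Type*} [MeasurableSpace Ω] (μ : Measure Ω) [IsProbabilityMeasure μ]
    (Φ : ℝ → ℝ) (hΦ : IsOrliczFunction Φ)
    (X : ℕ → Ω → ℝ) (X₀ : Ω → ℝ)
    (hXm : ∀ n, Measurable (X n)) (hX₀m : Measurable X₀)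
    (hint : ∀ n, Integrable (fun ω => Φ (|X n ω|)) μ)
    (hint₀ : Integrable (fun ω => Φ (|X₀ ω|)) μ)
    (has : ∀ᵐ ω ∂μ, Tendsto (fun n => X n ω) atTop (nhds (X₀ ω)))
    (hmom : Tendsto (fun n => ∫ ω, Φ (|X n ω|) ∂μ) atTop
      (nhds (∫ ω, Φ (|X₀ ω|) ∂μ))) :
    ∃ φ : ℕ → ℕ, StrictMono φ ∧
      (∃ Y : Ω → ℝ, Integrable (fun ω => Φ (|Y ω|)) μ ∧
        ∀ k, ∀ᵐ ω ∂μ, |X (φ k) ω| ≤ Y ω) ∧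
      (∀ᵐ ω ∂μ, Tendsto (fun k => X (φ k) ω) atTop (nhds (X₀ ω))) :=
  young_dominated_subsequence_general μ Φ hΦ X X₀ hXm hint hint₀ has hmom
end

section
/- Let ρ : L^∞ → ℝ be law invariant and order continuous on L^∞ (over a probability space). If X_n, X ∈ L^∞ satisfy ‖X_n‖_∞ ≤ ‖X‖_∞ for all n, the laws of X_n converge weakly to the law of some X′ with the same law as X, then ρ(X_n) → ρ(X). More precisely: if μ_n are laws supported in [−M,M] converging weakly to a law μ₀ supported in [−M,M], then R_ρ(μ_n) → R_ρ(μ₀). -/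
/-!
By the subsequence principle it suffices that every subsequence of `ρ (X n)` has a further
subsequence converging to `ρ X₀`. All `X n` are measurable functions `φ n ∘ T` of a single real
random variable `T`, so a Skorokhod-type coupling can be built on `ℝ` with the law `π` of `T` and
pulled back to `Ω`. On the countably many atoms of `π` nothing can be rearranged, but a diagonal
subsequence makes the values `φ n y` converge. On the nonatomic part the distribution function `F`
is uniformly distributed, so `quantile (law of φ n) ∘ F` has the law of `φ n`; these quantile
functions are monotone and bounded by `M`, and Helly's selection theorem makes them converge off a
countable, hence null, set. The resulting copies `Z k` of a subsequence converge almost surely; by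
weak convergence their limit has the law of `X₀`. Law invariance and order continuity then give
`ρ (X (n k)) = ρ (Z k) → ρ Z₀ = ρ X₀`.
-/

open MeasureTheory Filter Set Topology ProbabilityTheory
open scoped ENNReal

theorem exists_subseq_tendsto_of_forall_abs_le {ι : Type*} [Countable ι] {M : ℝ}
    (x : ℕ → ι → ℝ) (hx : ∀ k i, |x k i| ≤ M) :
    ∃ σ : ℕ → ℕ, StrictMono σ ∧ ∃ L : ι → ℝ,
      ∀ i, Tendsto (fun k => x (σ k) i) atTop (𝓝 (L i)) := by
  have hK : IsCompact (univ.pi fun _ : ι => Icc (-M) M) :=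
    isCompact_univ_pi fun _ => isCompact_Icc
  obtain ⟨L, -, σ, hσ, hlim⟩ := hK.tendsto_subseq (x := x) fun k =>
    mem_univ_pi.2 fun i => abs_le.1 (hx k i)
  exact ⟨σ, hσ, L, fun i => tendsto_pi_nhds.1 hlim i⟩

theorem exists_subseq_tendsto_of_monotone {M : ℝ} (f : ℕ → ℝ → ℝ) (hf : ∀ k, Monotone (f k))
    (hM : ∀ k u, |f k u| ≤ M) :
    ∃ σ : ℕ → ℕ, StrictMono σ ∧ ∃ g : ℝ → ℝ, Monotone g ∧
      ∀ u, ContinuousAt g u → Tendsto (fun k => f (σ k) u) atTop (𝓝 (g u)) := by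
  obtain ⟨σ, hσ, L, hL⟩ :=
    exists_subseq_tendsto_of_forall_abs_le (fun k (r : ℚ) => f k r) fun k r => hM k r
  have hLM : ∀ r, L r ≤ M := fun r =>
    le_of_tendsto' (hL r) fun k => (abs_le.1 (hM _ _)).2
  have hLmono : Monotone L := fun r r' h =>
    le_of_tendsto_of_tendsto' (hL r) (hL r') fun k => hf _ (by exact_mod_cast h)
  let g : ℝ → ℝ := fun u => ⨆ r : {r : ℚ // (r : ℝ) < u}, L r
  have : ∀ u, Nonempty {r : ℚ // (r : ℝ) < u} := fun u =>
    let ⟨r, hr⟩ := exists_rat_lt u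
    ⟨⟨r, hr⟩⟩
  have hbdd : ∀ u, BddAbove (range fun r : {r : ℚ // (r : ℝ) < u} => L r) := fun u =>
    ⟨M, forall_mem_range.2 fun r => hLM r⟩
  have le_g : ∀ {r : ℚ} {u : ℝ}, (r : ℝ) < u → L r ≤ g u := fun h =>
    le_ciSup (hbdd _) ⟨_, h⟩
  have g_le : ∀ {r : ℚ} {u : ℝ}, u ≤ r → g u ≤ L r := fun h =>
    ciSup_le fun r' => hLmono (Rat.cast_lt.1 (r'.2.trans_le h)).le
  refine ⟨σ, hσ, g, fun u v h => ciSup_le fun r => le_g (r.2.trans_le h), fun u hu => ?_⟩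
  refine tendsto_order.2 ⟨fun c hc => ?_, fun c hc => ?_⟩
  · obtain ⟨⟨r, hru⟩, hcr⟩ := exists_lt_of_lt_ciSup hc
    filter_upwards [(hL r).eventually (lt_mem_nhds hcr)] with k hk
    exact hk.trans_le (hf _ hru.le)
  · obtain ⟨v, hgv, huv⟩ := ((hu.eventually (gt_mem_nhds hc)).filter_mono
      nhdsWithin_le_nhds |>.and self_mem_nhdsWithin : ∀ᶠ v in 𝓝[>] u, g v < c ∧ u < v).exists
    obtain ⟨r, hur, hrv⟩ := exists_rat_btwn huv
    filter_upwards [(hL r).eventually (gt_mem_nhds ((le_g hrv).trans_lt hgv))] with k hk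
    exact (hf _ hur.le).trans_lt hk

theorem exists_subseq_tendsto_of_monotoneOn {s : Set ℝ} {M : ℝ} (f : ℕ → ℝ → ℝ)
    (hf : ∀ k, MonotoneOn (f k) s) (hM : ∀ k, ∀ u ∈ s, |f k u| ≤ M) :
    ∃ σ : ℕ → ℕ, StrictMono σ ∧ ∃ g : ℝ → ℝ, Monotone g ∧
      ∀ u ∈ s, ContinuousAt g u → Tendsto (fun k => f (σ k) u) atTop (𝓝 (g u)) := by
  have hbdd : ∀ k, BddBelow (f k '' s) ∧ BddAbove (f k '' s) := fun k =>
    ⟨⟨-M, forall_mem_image.2 fun u hu => (abs_le.1 (hM k u hu)).1⟩,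
     ⟨M, forall_mem_image.2 fun u hu => (abs_le.1 (hM k u hu)).2⟩⟩
  choose F hFmono hF using fun k => (hf k).exists_monotone_extension (hbdd k).1 (hbdd k).2
  let G : ℕ → ℝ → ℝ := fun k u => max (-|M|) (min |M| (F k u))
  have hG : ∀ k, ∀ u ∈ s, G k u = f k u := fun k u hu => by
    have := abs_le.1 ((hM k u hu).trans (le_abs_self M))
    simp only [G, ← hF k hu, min_eq_right this.2, max_eq_right this.1]
  obtain ⟨σ, hσ, g, hg, hlim⟩ := exists_subseq_tendsto_of_monotone G
    (fun k => monotone_const.max (monotone_const.min (hFmono k)))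
    fun k u => abs_le.2 ⟨le_max_left _ _, max_le (neg_le_self (abs_nonneg M)) (min_le_left _ _)⟩
  exact ⟨σ, hσ, g, hg, fun u hu hgu => (hlim u hgu).congr fun k => hG _ u hu⟩

/-- Outside `Ioo 0 1` the infimum is a junk value; replacing it by `0` keeps `quantile μ`
measurable. -/
noncomputable def quantile (μ : Measure ℝ) : ℝ → ℝ :=
  (Ioo 0 1).indicator fun u => sInf {x | u ≤ cdf μ x}

section Quantile

variable {μ : Measure ℝ} {u : ℝ}

theorem quantile_le_iff (hu : u ∈ Ioo 0 1) {x : ℝ} : quantile μ u ≤ x ↔ u ≤ cdf μ x := by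
  set S := {x | u ≤ cdf μ x}
  have hne : S.Nonempty :=
    ((tendsto_cdf_atTop μ).eventually_const_lt hu.2).exists.imp fun _ => le_of_lt
  have hbdd : BddBelow S := by
    obtain ⟨a, ha⟩ := eventually_atBot.1 ((tendsto_cdf_atBot μ).eventually_lt_const hu.1)
    exact ⟨a, fun y hy => le_of_not_gt fun hya => (ha y hya.le).not_ge hy⟩
  have hmem : u ≤ cdf μ (sInf S) := by
    refine ge_of_tendsto ((cdf μ).right_continuous _ |>.mono Ioi_subset_Ici_self) ?_
    filter_upwards [self_mem_nhdsWithin] with y hy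
    obtain ⟨z, hz, hzy⟩ := exists_lt_of_csInf_lt hne hy
    exact hz.trans (monotone_cdf μ hzy.le)
  rw [quantile, indicator_of_mem hu]
  exact ⟨fun h => hmem.trans (monotone_cdf μ h), fun h => csInf_le hbdd h⟩

theorem monotoneOn_quantile : MonotoneOn (quantile μ) (Ioo 0 1) := fun _ hu _ hv huv =>
  (quantile_le_iff hu).2 (huv.trans ((quantile_le_iff hv).1 le_rfl))

theorem measurable_quantile : Measurable (quantile μ) := by
  refine measurable_of_Iic fun x => ?_
  have : quantile μ ⁻¹' Iic x = Ioo 0 1 ∩ Iic (cdf μ x) ∪ (Ioo 0 1)ᶜ ∩ {_u | 0 ≤ x} := by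
    ext u
    by_cases hu : u ∈ Ioo 0 1
    · simp [hu, quantile_le_iff hu]
    · simp [quantile, hu]
  rw [this]
  exact (measurableSet_Ioo.inter measurableSet_Iic).union
    (measurableSet_Ioo.compl.inter (MeasurableSet.const _))

theorem map_quantile [IsProbabilityMeasure μ] :
    (volume.restrict (Ioo 0 1)).map (quantile μ) = μ := by
  refine Measure.ext_of_Iic _ _ fun x => ?_
  rw [Measure.map_apply measurable_quantile measurableSet_Iic,
    Measure.restrict_apply (measurable_quantile measurableSet_Iic), ← ofReal_cdf]
  have : quantile μ ⁻¹' Iic x ∩ Ioo 0 1 = Ioo 0 1 ∩ Iic (cdf μ x) := by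
    ext u
    simp only [mem_inter_iff, mem_preimage, mem_Iic]
    exact ⟨fun h => ⟨h.2, (quantile_le_iff h.2).1 h.1⟩,
      fun h => ⟨(quantile_le_iff h.1).2 h.2, h.1⟩⟩
  rw [this, measure_congr ((Ioo_ae_eq_Ioc (μ := volume) (a := (0 : ℝ)) (b := 1)).inter
    (ae_eq_refl (Iic (cdf μ x)))), Ioc_inter_Iic, Real.volume_Ioc,
    min_eq_right (cdf_le_one μ x), sub_zero]

theorem cdf_quantile (hcont : Continuous (cdf μ)) (hu : u ∈ Ioo 0 1) :
    cdf μ (quantile μ u) = u := by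
  refine le_antisymm ?_ ((quantile_le_iff hu).1 le_rfl)
  refine le_of_tendsto (hcont.continuousAt.tendsto.mono_left nhdsWithin_le_nhds :
    Tendsto _ (𝓝[<] (quantile μ u)) _) ?_
  filter_upwards [self_mem_nhdsWithin] with x hx
  exact le_of_not_ge fun h => hx.not_ge ((quantile_le_iff hu).2 h)

theorem continuous_cdf [IsProbabilityMeasure μ] [NullSingletonClass μ] : Continuous (cdf μ) := by
  refine continuous_iff_continuousAt.2 fun x => ?_
  rw [(monotone_cdf μ).continuousAt_iff_leftLim_eq_rightLim, StieltjesFunction.rightLim_eq]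
  have h := (cdf μ).measure_singleton x
  rw [measure_cdf, measure_singleton, eq_comm, ENNReal.ofReal_eq_zero, sub_nonpos] at h
  exact le_antisymm ((monotone_cdf μ).leftLim_le le_rfl) h

theorem map_cdf [IsProbabilityMeasure μ] [NullSingletonClass μ] :
    μ.map (cdf μ) = volume.restrict (Ioo 0 1) := by
  calc μ.map (cdf μ) = ((volume.restrict (Ioo 0 1)).map (quantile μ)).map (cdf μ) := by
        rw [map_quantile]
    _ = volume.restrict (Ioo 0 1) := by
      rw [Measure.map_map (monotone_cdf μ).measurable measurable_quantile,
        Measure.map_congr (g := id), Measure.map_id]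
      filter_upwards [ae_restrict_mem measurableSet_Ioo] with u hu
        using cdf_quantile continuous_cdf hu

theorem abs_quantile_le [IsProbabilityMeasure μ] {M : ℝ} (hμ : ∀ᵐ x ∂μ, |x| ≤ M)
    (hu : u ∈ Ioo 0 1) : |quantile μ u| ≤ M := by
  have hnull : μ {x | ¬|x| ≤ M} = 0 := ae_iff.1 hμ
  refine abs_le.2 ⟨le_of_not_gt fun h => ?_, (quantile_le_iff hu).2 ?_⟩
  · have h0 : cdf μ (quantile μ u) = 0 := by
      rw [cdf_eq_real, measureReal_eq_zero_iff]
      refine measure_mono_null (fun x (hx : x ≤ _) => ?_) hnull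
      simp only [mem_ofPred_eq, not_le, lt_abs]
      right
      linarith
    linarith [(quantile_le_iff hu (μ := μ)).1 le_rfl, hu.1]
  · have h1 : μ (Iic M) = 1 := by
      rw [← prob_compl_eq_zero_iff measurableSet_Iic, compl_Iic]
      exact measure_mono_null (fun x (hx : M < x) => by simp [lt_abs, hx]) hnull
    rw [cdf_eq_real, measureReal_def, h1, ENNReal.toReal_one]
    exact hu.2.le

end Quantile

structure IsSkorokhodRepresentation {α : Type*} [MeasurableSpace α] (μ : Measure α)
    (φ W : ℕ → α → ℝ) : Prop where
  measurable : ∀ k, Measurable (W k)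
  identDistrib : ∀ k, IdentDistrib (W k) (φ k) μ μ
  ae_exists_tendsto : ∀ᵐ x ∂μ, ∃ l, Tendsto (fun k => W k x) atTop (𝓝 l)

namespace IsSkorokhodRepresentation

variable {α β : Type*} [MeasurableSpace α] [MeasurableSpace β] {μ : Measure α}
  {φ W : ℕ → α → ℝ}

theorem self (hφ : ∀ k, Measurable (φ k))
    (h : ∀ᵐ x ∂μ, ∃ l, Tendsto (fun k => φ k x) atTop (𝓝 l)) :
    IsSkorokhodRepresentation μ φ φ :=
  ⟨hφ, fun k => IdentDistrib.refl (hφ k).aemeasurable, h⟩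

theorem smul (h : IsSkorokhodRepresentation μ φ W) (c : ℝ≥0∞) :
    IsSkorokhodRepresentation (c • μ) φ W where
  measurable := h.measurable
  identDistrib k :=
    { aemeasurable_fst := (h.measurable k).aemeasurable
      aemeasurable_snd := (h.identDistrib k).aemeasurable_snd.smul_measure c
      map_eq := by rw [Measure.map_smul, Measure.map_smul, (h.identDistrib k).map_eq] }
  ae_exists_tendsto := Measure.ae_smul_measure h.ae_exists_tendsto c

theorem comp {T : α → β} {φ W : ℕ → β → ℝ} (hT : Measurable T)
    (h : IsSkorokhodRepresentation (μ.map T) φ W) (hφ : ∀ k, Measurable (φ k)) :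
    IsSkorokhodRepresentation μ (fun k => φ k ∘ T) (fun k => W k ∘ T) where
  measurable k := (h.measurable k).comp hT
  identDistrib k :=
    { aemeasurable_fst := ((h.measurable k).comp hT).aemeasurable
      aemeasurable_snd := ((hφ k).comp hT).aemeasurable
      map_eq := by
        rw [← Measure.map_map (h.measurable k) hT, ← Measure.map_map (hφ k) hT,
          (h.identDistrib k).map_eq] }
  ae_exists_tendsto := ae_of_ae_map hT.aemeasurable h.ae_exists_tendsto

theorem piecewise {s : Set α} [DecidablePred (· ∈ s)] (hs : MeasurableSet s)
    {W₁ W₂ : ℕ → α → ℝ} (hφ : ∀ k, Measurable (φ k))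
    (h₁ : IsSkorokhodRepresentation (μ.restrict s) φ W₁)
    (h₂ : IsSkorokhodRepresentation (μ.restrict sᶜ) φ W₂) :
    IsSkorokhodRepresentation μ φ (fun k => s.piecewise (W₁ k) (W₂ k)) := by
  have hm : ∀ k, Measurable (s.piecewise (W₁ k) (W₂ k)) := fun k =>
    (h₁.measurable k).piecewise hs (h₂.measurable k)
  refine ⟨hm, fun k => ⟨(hm k).aemeasurable, (hφ k).aemeasurable, ?_⟩, ?_⟩
  · have h₁' : (μ.restrict s).map (s.piecewise (W₁ k) (W₂ k)) = (μ.restrict s).map (φ k) := by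
      rw [← (h₁.identDistrib k).map_eq]
      exact Measure.map_congr
        ((ae_restrict_iff' hs).2 (ae_of_all _ fun x hx => piecewise_eq_of_mem _ _ _ hx))
    have h₂' : (μ.restrict sᶜ).map (s.piecewise (W₁ k) (W₂ k)) =
        (μ.restrict sᶜ).map (φ k) := by
      rw [← (h₂.identDistrib k).map_eq]
      exact Measure.map_congr
        ((ae_restrict_iff' hs.compl).2 (ae_of_all _ fun x hx => piecewise_eq_of_notMem _ _ _ hx))
    rw [← Measure.restrict_add_restrict_compl (μ := μ) hs, Measure.map_add _ _ (hm k),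
      Measure.map_add _ _ (hφ k), h₁', h₂']
  · rw [← Measure.restrict_add_restrict_compl (μ := μ) hs, ae_add_measure_iff]
    constructor
    · filter_upwards [h₁.ae_exists_tendsto, ae_restrict_mem hs] with x hx hxs
      simpa [piecewise_eq_of_mem _ _ _ hxs] using hx
    · filter_upwards [h₂.ae_exists_tendsto, ae_restrict_mem hs.compl] with x hx hxs
      simpa [piecewise_eq_of_notMem _ _ _ hxs] using hx

end IsSkorokhodRepresentation

theorem exists_subseq_isSkorokhodRepresentation_of_isProbabilityMeasure (P : Measure ℝ)
    [IsProbabilityMeasure P] [NullSingletonClass P] {M : ℝ} {φ : ℕ → ℝ → ℝ}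
    (hφ : ∀ k, Measurable (φ k)) (hφM : ∀ k, ∀ᵐ x ∂P, |φ k x| ≤ M) :
    ∃ σ : ℕ → ℕ, StrictMono σ ∧ ∃ W, IsSkorokhodRepresentation P (fun k => φ (σ k)) W := by
  have := fun k => Measure.isProbabilityMeasure_map (μ := P) (hφ k).aemeasurable
  have hlaw : ∀ k, ∀ᵐ y ∂P.map (φ k), |y| ≤ M := fun k =>
    (ae_map_iff (hφ k).aemeasurable (measurableSet_le measurable_id.abs measurable_const)).2
      (hφM k)
  obtain ⟨σ, hσ, g, hg, hlim⟩ := exists_subseq_tendsto_of_monotoneOn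
    (fun k => quantile (P.map (φ k))) (fun k => monotoneOn_quantile)
    (fun k u hu => abs_quantile_le (hlaw k) hu)
  have hF := (monotone_cdf P).measurable
  refine ⟨σ, hσ, fun k => quantile (P.map (φ (σ k))) ∘ cdf P,
    ⟨fun k => measurable_quantile.comp hF, fun k => ⟨(measurable_quantile.comp hF).aemeasurable,
      (hφ _).aemeasurable, ?_⟩, ?_⟩⟩
  · rw [← Measure.map_map measurable_quantile hF, map_cdf, map_quantile]
  · have hu : ∀ᵐ u ∂(P.map (cdf P)), u ∈ Ioo 0 1 ∧ ContinuousAt g u := by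
      rw [map_cdf]
      filter_upwards [ae_restrict_mem measurableSet_Ioo,
        ae_restrict_of_ae (hg.countable_not_continuousAt.ae_notMem volume)] with u hu hgu
        using ⟨hu, not_not.1 hgu⟩
    filter_upwards [ae_of_ae_map hF.aemeasurable hu] with x hx
    exact ⟨_, hlim _ hx.1 hx.2⟩

theorem exists_subseq_isSkorokhodRepresentation_of_nullSingletonClass (ν : Measure ℝ)
    [IsFiniteMeasure ν] [NullSingletonClass ν] {M : ℝ} {φ : ℕ → ℝ → ℝ}
    (hφ : ∀ k, Measurable (φ k)) (hφM : ∀ k, ∀ᵐ x ∂ν, |φ k x| ≤ M) :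
    ∃ σ : ℕ → ℕ, StrictMono σ ∧ ∃ W, IsSkorokhodRepresentation ν (fun k => φ (σ k)) W := by
  rcases eq_zero_or_neZero ν with rfl | hν
  · exact ⟨id, strictMono_id, _, .self (fun k => hφ k) (by simp)⟩
  have : NullSingletonClass ((ν univ)⁻¹ • ν) := ⟨fun x => by simp⟩
  obtain ⟨σ, hσ, W, hW⟩ := exists_subseq_isSkorokhodRepresentation_of_isProbabilityMeasure
    ((ν univ)⁻¹ • ν) hφ fun k => Measure.ae_smul_measure (hφM k) _
  refine ⟨σ, hσ, W, ?_⟩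
  simpa [smul_smul, ENNReal.mul_inv_cancel (NeZero.ne _) (measure_ne_top _ _)]
    using hW.smul (ν univ)

theorem exists_subseq_isSkorokhodRepresentation_real (π : Measure ℝ) [IsFiniteMeasure π]
    {M : ℝ} {φ : ℕ → ℝ → ℝ} (hφ : ∀ k, Measurable (φ k)) (hφM : ∀ k, ∀ᵐ x ∂π, |φ k x| ≤ M) :
    ∃ σ : ℕ → ℕ, StrictMono σ ∧ ∃ W, IsSkorokhodRepresentation π (fun k => φ (σ k)) W := by
  classical
  set D := {y : ℝ | 0 < π {y}}
  have hD : D.Countable := Measure.countable_meas_pos_of_disjoint_of_meas_iUnion_ne_top π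
    measurableSet_singleton (fun y z hyz => disjoint_singleton.2 hyz) (measure_ne_top π _)
  have hDM : ∀ k, ∀ y ∈ D, |φ k y| ≤ M := fun k y hy => by
    by_contra h
    exact hy.ne' (measure_mono_null (singleton_subset_iff.2 h) (ae_iff.1 (hφM k)))
  have := hD.to_subtype
  obtain ⟨σ₁, hσ₁, L, hL⟩ :=
    exists_subseq_tendsto_of_forall_abs_le (fun k (y : D) => φ k y) fun k y => hDM k y y.2
  have : NullSingletonClass (π.restrict Dᶜ) := ⟨fun y => by
    rw [Measure.restrict_apply (measurableSet_singleton y)]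
    by_cases hy : y ∈ D
    · simp [hy]
    · exact measure_mono_null inter_subset_left (nonpos_iff_eq_zero.1 (not_lt.1 hy))⟩
  obtain ⟨σ₂, hσ₂, V, hV⟩ := exists_subseq_isSkorokhodRepresentation_of_nullSingletonClass
    (π.restrict Dᶜ) (fun k => hφ (σ₁ k)) fun k => ae_restrict_of_ae (hφM _)
  have hatoms : IsSkorokhodRepresentation (π.restrict D) (fun k => φ (σ₁ (σ₂ k)))
      (fun k => φ (σ₁ (σ₂ k))) :=
    .self (fun k => hφ _) ((ae_restrict_iff' hD.measurableSet).2
      (ae_of_all _ fun y hy => ⟨L ⟨y, hy⟩, (hL ⟨y, hy⟩).comp hσ₂.tendsto_atTop⟩))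
  exact ⟨σ₁ ∘ σ₂, hσ₁.comp hσ₂, _, hatoms.piecewise hD.measurableSet (fun k => hφ _) hV⟩

theorem exists_measurable_real_factorization {Ω : Type*} [MeasurableSpace Ω]
    (X : ℕ → Ω → ℝ) (hX : ∀ n, Measurable (X n)) :
    ∃ T : Ω → ℝ, Measurable T ∧
      ∃ φ : ℕ → ℝ → ℝ, (∀ n, Measurable (φ n)) ∧ ∀ n, φ n ∘ T = X n := by
  obtain ⟨ι, hι⟩ := exists_measurableEmbedding_real (ℕ → ℝ)
  obtain ⟨G, hG, hGι⟩ := hι.exists_measurable_extend measurable_id fun _ => ⟨0⟩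
  refine ⟨ι ∘ fun ω n => X n ω, hι.measurable.comp (measurable_pi_lambda _ hX),
    fun n t => G t n, fun n => (measurable_pi_apply n).comp hG, fun n => funext fun ω => ?_⟩
  exact congrFun (congrFun hGι fun n => X n ω) n

theorem exists_subseq_isSkorokhodRepresentation {Ω : Type*} [MeasurableSpace Ω]
    (μ : Measure Ω) [IsFiniteMeasure μ] {M : ℝ} {X : ℕ → Ω → ℝ} (hX : ∀ n, Measurable (X n))
    (hXM : ∀ n, ∀ᵐ ω ∂μ, |X n ω| ≤ M) :
    ∃ σ : ℕ → ℕ, StrictMono σ ∧ ∃ Z, IsSkorokhodRepresentation μ (fun k => X (σ k)) Z := by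
  obtain ⟨T, hT, φ, hφ, hφT⟩ := exists_measurable_real_factorization X hX
  have hφM : ∀ n, ∀ᵐ t ∂μ.map T, |φ n t| ≤ M := fun n =>
    (ae_map_iff hT.aemeasurable (measurableSet_le (hφ n).abs measurable_const)).2
      (by simpa [← hφT n] using hXM n)
  obtain ⟨σ, hσ, W, hW⟩ := exists_subseq_isSkorokhodRepresentation_real (μ.map T) hφ hφM
  have := hW.comp hT fun k => hφ _
  simp only [hφT] at this
  exact ⟨σ, hσ, _, this⟩

theorem map_eq_of_tendsto_ae_of_tendsto_integral {Ω : Type*} [MeasurableSpace Ω]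
    {μ : Measure Ω} [IsFiniteMeasure μ] {Y : ℕ → Ω → ℝ} {Y₀ X₀ : Ω → ℝ}
    (hY : ∀ k, Measurable (Y k)) (hY₀ : Measurable Y₀) (hX₀ : Measurable X₀)
    (hlim : ∀ᵐ ω ∂μ, Tendsto (fun k => Y k ω) atTop (𝓝 (Y₀ ω)))
    (hweak : ∀ f : BoundedContinuousFunction ℝ ℝ,
      Tendsto (fun k => ∫ ω, f (Y k ω) ∂μ) atTop (𝓝 (∫ ω, f (X₀ ω) ∂μ))) :
    μ.map Y₀ = μ.map X₀ := by
  refine ext_of_forall_integral_eq_of_IsFiniteMeasure fun f => ?_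
  rw [integral_map hY₀.aemeasurable f.continuous.aestronglyMeasurable,
    integral_map hX₀.aemeasurable f.continuous.aestronglyMeasurable]
  refine tendsto_nhds_unique ?_ (hweak f)
  refine tendsto_integral_of_dominated_convergence (fun _ => ‖f‖)
    (fun k => (f.continuous.measurable.comp (hY k)).aestronglyMeasurable) (integrable_const _)
    (fun k => ae_of_all _ fun ω => f.norm_coe_le_norm _) ?_
  filter_upwards [hlim] with ω hω using (f.continuous.tendsto _).comp hω

theorem Linfty_orderContinuous_weak_consistency_general
    {Ω : Type*} [MeasurableSpace Ω] (μ : Measure Ω) [IsProbabilityMeasure μ]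
    (ρ : (Ω → ℝ) → ℝ)
    (hlaw : ∀ X Y : Ω → ℝ, Measurable X → Measurable Y →
      (∃ C : ℝ, ∀ᵐ ω ∂μ, |X ω| ≤ C) → (∃ C : ℝ, ∀ᵐ ω ∂μ, |Y ω| ≤ C) →
      μ.map X = μ.map Y → ρ X = ρ Y)
    (hoc : ∀ (X : ℕ → Ω → ℝ) (X₀ : Ω → ℝ),
      (∀ n, Measurable (X n)) → Measurable X₀ →
      (∃ C : ℝ, (∀ᵐ ω ∂μ, |X₀ ω| ≤ C) ∧ ∀ n, ∀ᵐ ω ∂μ, |X n ω| ≤ C) →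
      (∀ᵐ ω ∂μ, Tendsto (fun n => X n ω) atTop (nhds (X₀ ω))) →
      Tendsto (fun n => ρ (X n)) atTop (nhds (ρ X₀)))
    (M : ℝ) (X : ℕ → Ω → ℝ) (X₀ : Ω → ℝ)
    (hXm : ∀ n, Measurable (X n)) (hX₀m : Measurable X₀)
    (hXb : ∀ n, ∀ᵐ ω ∂μ, |X n ω| ≤ M) (hX₀b : ∀ᵐ ω ∂μ, |X₀ ω| ≤ M)
    (hweak : ∀ f : BoundedContinuousFunction ℝ ℝ,
      Tendsto (fun n => ∫ ω, f (X n ω) ∂μ) atTop (nhds (∫ ω, f (X₀ ω) ∂μ))) :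
    Tendsto (fun n => ρ (X n)) atTop (nhds (ρ X₀)) := by
  refine tendsto_of_subseq_tendsto fun ns hns => ?_
  obtain ⟨σ, hσ, Z, hZ⟩ :=
    exists_subseq_isSkorokhodRepresentation μ (fun n => hXm (ns n)) fun n => hXb (ns n)
  set Z₀ : Ω → ℝ := fun ω => limUnder atTop fun k => Z k ω
  have hZ₀m : Measurable Z₀ :=
    (StronglyMeasurable.limUnder fun k => (hZ.measurable k).stronglyMeasurable).measurable
  have hZlim : ∀ᵐ ω ∂μ, Tendsto (fun k => Z k ω) atTop (𝓝 (Z₀ ω)) :=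
    hZ.ae_exists_tendsto.mono fun ω hω => tendsto_nhds_limUnder hω
  have hZb : ∀ k, ∀ᵐ ω ∂μ, |Z k ω| ≤ M := fun k =>
    (hZ.identDistrib k).symm.ae_snd (measurableSet_le measurable_id.abs measurable_const) (hXb _)
  have hZ₀b : ∀ᵐ ω ∂μ, |Z₀ ω| ≤ M := by
    filter_upwards [hZlim, ae_all_iff.2 hZb] with ω hω hb
    exact le_of_tendsto' ((continuous_abs.tendsto _).comp hω) hb
  have hZ₀law : μ.map Z₀ = μ.map X₀ :=
    map_eq_of_tendsto_ae_of_tendsto_integral hZ.measurable hZ₀m hX₀m hZlim fun f =>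
      ((hweak f).comp (hns.comp hσ.tendsto_atTop)).congr fun k =>
        ((hZ.identDistrib k).comp f.continuous.measurable).integral_eq.symm
  refine ⟨σ, ?_⟩
  rw [← hlaw Z₀ X₀ hZ₀m hX₀m ⟨M, hZ₀b⟩ ⟨M, hX₀b⟩ hZ₀law]
  exact (hoc Z Z₀ hZ.measurable hZ₀m ⟨M, hZ₀b, hZb⟩ hZlim).congr fun k =>
    hlaw _ _ (hZ.measurable k) (hXm _) ⟨M, hZb k⟩ ⟨M, hXb _⟩ (hZ.identDistrib k).map_eq

/-- An order-continuous, law-invariant functional on `L^∞` over a nonatomic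
probability space maps weakly convergent uniformly bounded laws to convergent
values: if `|X_n| ≤ M`, `|X₀| ≤ M` a.s. and the laws of `X_n` converge weakly
to the law of `X₀`, then `ρ(X_n) → ρ(X₀)`. -/
theorem Linfty_orderContinuous_weak_consistency
    {Ω : Type*} [MeasurableSpace Ω] (μ : Measure Ω) [IsProbabilityMeasure μ]
    [MeasureTheory.NullSingletonClass μ]
    (ρ : (Ω → ℝ) → ℝ)
    (hlaw : ∀ X Y : Ω → ℝ, Measurable X → Measurable Y →
      (∃ C : ℝ, ∀ᵐ ω ∂μ, |X ω| ≤ C) → (∃ C : ℝ, ∀ᵐ ω ∂μ, |Y ω| ≤ C) →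
      μ.map X = μ.map Y → ρ X = ρ Y)
    (hoc : ∀ (X : ℕ → Ω → ℝ) (X₀ : Ω → ℝ),
      (∀ n, Measurable (X n)) → Measurable X₀ →
      (∃ C : ℝ, (∀ᵐ ω ∂μ, |X₀ ω| ≤ C) ∧ ∀ n, ∀ᵐ ω ∂μ, |X n ω| ≤ C) →
      (∀ᵐ ω ∂μ, Tendsto (fun n => X n ω) atTop (nhds (X₀ ω))) →
      Tendsto (fun n => ρ (X n)) atTop (nhds (ρ X₀)))
    (M : ℝ) (X : ℕ → Ω → ℝ) (X₀ : Ω → ℝ)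
    (hXm : ∀ n, Measurable (X n)) (hX₀m : Measurable X₀)
    (hXb : ∀ n, ∀ᵐ ω ∂μ, |X n ω| ≤ M) (hX₀b : ∀ᵐ ω ∂μ, |X₀ ω| ≤ M)
    (hweak : ∀ f : BoundedContinuousFunction ℝ ℝ,
      Tendsto (fun n => ∫ ω, f (X n ω) ∂μ) atTop (nhds (∫ ω, f (X₀ ω) ∂μ))) :
    Tendsto (fun n => ρ (X n)) atTop (nhds (ρ X₀)) :=
  Linfty_orderContinuous_weak_consistency_general μ ρ hlaw hoc M X X₀ hXm hX₀m hXb hX₀b hweak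
end
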